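/- arXiv:2005.12363 — 4 statements merged into one kernel-verified Lean document; each statement's English description precedes it below -/
import Mathlib

section
/- For every nonnegative integer m and every complex number z, the generalized binomial coefficient satisfies binom(m, z) = Σ_{k=0}^{m} C(m, k) · sinc(z − k), where C(m, k) is the ordinary binomial coefficient. -/
open scoped Real

/-- The generalized binomial coefficient `binom w z = Γ(w+1) / (Γ(z+1) Γ(w-z+1))`. -/
noncomputable def cbinom (w z : ℂ) : ℂ :=
  Complex.Gamma (w + 1) / (Complex.Gamma (z + 1) * Complex.Gamma (w - z + 1))

/-- The (normalized) sinc function on ℂ. -/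
noncomputable def csinc (z : ℂ) : ℂ :=
  if z = 0 then 1 else Complex.sin (π * z) / (π * z)

lemma sin_pi_int' (n : ℤ) : Complex.sin (π * n) = 0 := by
  rw [Complex.sin_eq_zero_iff]; exact ⟨n, by ring⟩

lemma sin_pi_nat' (n : ℕ) : Complex.sin (π * n) = 0 := by
  have := sin_pi_int' n; push_cast at this ⊢; exact this

lemma cos_pi_nat' (n : ℕ) : Complex.cos (π * n) = (-1) ^ n := by
  induction n with
  | zero => simp
  | succ k ih =>
    push_cast
    rw [mul_add, mul_one, Complex.cos_add, ih, Complex.cos_pi, Complex.sin_pi]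
    push_cast at ih ⊢
    ring

lemma sin_pi_sub_nat' (z : ℂ) (k : ℕ) :
    Complex.sin (π * (z - k)) = (-1) ^ k * Complex.sin (π * z) := by
  rw [mul_sub, Complex.sin_sub, cos_pi_nat', sin_pi_nat' k]
  ring

lemma csinc_int_ne (n : ℤ) (hn : n ≠ 0) : csinc (n : ℂ) = 0 := by
  have h : (n : ℂ) ≠ 0 := Int.cast_ne_zero.mpr hn
  rw [csinc, if_neg h, sin_pi_int', zero_div]

lemma partial_fraction (m : ℕ) : ∀ z : ℂ, (∀ k : ℕ, k ≤ m → z ≠ k) →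
    ∑ k ∈ Finset.range (m+1), (-1:ℂ)^k * m.choose k * (z - k)⁻¹
      = (-1)^m * m.factorial * (∏ j ∈ Finset.range (m+1), (z - j))⁻¹ := by
  induction m with
  | zero => intro z hz; simp
  | succ m ih =>
    intro z hz
    have h1 : ∀ k : ℕ, k ≤ m → z ≠ k := fun k hk => hz k (hk.trans (Nat.le_succ m))
    have h2 : ∀ k : ℕ, k ≤ m → z - 1 ≠ k := by
      intro k hk h
      exact hz (k+1) (by omega) (by push_cast; linear_combination h)
    have e1 := ih z h1
    have e2 := ih (z - 1) h2
    -- split the sum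
    have split : ∑ k ∈ Finset.range (m+1+1), (-1:ℂ)^k * (m+1).choose k * (z - k)⁻¹
        = (∑ k ∈ Finset.range (m+1), (-1:ℂ)^k * m.choose k * (z - k)⁻¹)
          - (∑ k ∈ Finset.range (m+1), (-1:ℂ)^k * m.choose k * ((z-1) - k)⁻¹) := by
      rw [Finset.sum_range_succ' (fun k => (-1:ℂ)^k * (m+1).choose k * (z - k)⁻¹) (m+1)]
      have : ∀ k ∈ Finset.range (m+1), (-1:ℂ)^(k+1) * (m+1).choose (k+1) * (z - (k+1:ℕ))⁻¹
          = (-1)^(k+1) * m.choose (k+1) * (z - (k+1:ℕ))⁻¹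
            - (-1)^k * m.choose k * ((z-1) - k)⁻¹ := by
        intro k _
        rw [Nat.choose_succ_succ]
        push_cast
        have : z - (k+1 : ℂ) = (z - 1) - k := by ring
        rw [this]
        ring
      rw [Finset.sum_congr rfl this, Finset.sum_sub_distrib]
      have : (∑ k ∈ Finset.range (m+1), (-1:ℂ)^(k+1) * m.choose (k+1) * (z - (k+1:ℕ))⁻¹)
          + (-1:ℂ)^0 * ((m+1).choose 0 : ℂ) * (z - (0:ℕ))⁻¹
          = ∑ k ∈ Finset.range (m+2), (-1:ℂ)^k * m.choose k * (z - k)⁻¹ := by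
        rw [Finset.sum_range_succ' (fun k => (-1:ℂ)^k * (m.choose k : ℂ) * (z - k)⁻¹) (m+1)]
        simp
      rw [sub_add_eq_add_sub, this, Finset.sum_range_succ]
      simp [Nat.choose_succ_self]
    rw [split, e1, e2]
    -- now algebra
    have hP : (∏ j ∈ Finset.range (m+1), (z - j)) ≠ 0 := by
      apply Finset.prod_ne_zero_iff.mpr
      intro j hj
      exact sub_ne_zero.mpr (hz j (by simp at hj; omega))
    have hz0 : z ≠ 0 := by have := hz 0 (by omega); simpa using this
    have ht : z - ((m:ℂ)+1) ≠ 0 := by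
      have := hz (m+1) le_rfl; push_cast at this; exact sub_ne_zero.mpr this
    have hQ : (∏ j ∈ Finset.range (m+1), (z - 1 - (j:ℂ))) ≠ 0 := by
      apply Finset.prod_ne_zero_iff.mpr
      intro j hj
      have := hz (j+1) (by simp at hj; omega)
      push_cast at this
      intro h
      exact this (by linear_combination h)
    have hR1 : (∏ j ∈ Finset.range (m+1+1), (z - (j:ℂ)))
        = (∏ j ∈ Finset.range (m+1), (z - (j:ℂ))) * (z - ((m:ℂ)+1)) := by
      rw [Finset.prod_range_succ]; push_cast; ring
    have hR2 : (∏ j ∈ Finset.range (m+1+1), (z - (j:ℂ)))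
        = z * (∏ j ∈ Finset.range (m+1), (z - 1 - (j:ℂ))) := by
      rw [Finset.prod_range_succ' (fun j => z - (j:ℂ)) (m+1)]
      rw [mul_comm]
      congr 1
      · simp
      · exact Finset.prod_congr rfl (fun j _ => by push_cast; ring)
    have hR : (∏ j ∈ Finset.range (m+1+1), (z - (j:ℂ))) ≠ 0 := by
      rw [hR1]; exact mul_ne_zero hP ht
    field_simp
    push_cast [Nat.factorial_succ]
    linear_combination ((-1:ℂ)^m * m.factorial * (∏ j ∈ Finset.range (m+1), (z - 1 - (j:ℂ)))) * hR1
      - ((-1:ℂ)^m * m.factorial * (∏ j ∈ Finset.range (m+1), (z - (j:ℂ)))) * hR2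

lemma Gamma_shift (m : ℕ) (z : ℂ) (hz : ∀ k : ℕ, 1 ≤ k → z ≠ k) :
    Complex.Gamma ((m:ℂ) - z + 1)
      = (∏ j ∈ Finset.range m, ((j:ℂ) + 1 - z)) * Complex.Gamma (1 - z) := by
  induction m with
  | zero => rw [show ((0:ℕ):ℂ) - z + 1 = 1 - z by push_cast; ring]; simp
  | succ m ih =>
    have h1 : ((m+1:ℕ):ℂ) - z + 1 = ((m:ℂ) - z + 1) + 1 := by push_cast; ring
    have h2 : (m:ℂ) - z + 1 ≠ 0 := by
      have := hz (m+1) (by omega)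
      intro h
      apply this
      push_cast
      linear_combination -h
    rw [h1, Complex.Gamma_add_one _ h2, ih, Finset.prod_range_succ]
    ring

theorem binom_eq_finite_sum_sinc (m : ℕ) (z : ℂ) :
    cbinom (m : ℂ) z = ∑ k ∈ Finset.range (m + 1), (m.choose k : ℂ) * csinc (z - k) := by
  by_cases hint : ∃ n : ℤ, z = n
  · obtain ⟨n, rfl⟩ := hint
    by_cases hn : 0 ≤ n ∧ n ≤ m
    · -- integer in range: both sides equal choose
      obtain ⟨hn0, hnm⟩ := hn
      set k0 := n.toNat with hk0
      have hzn : (n : ℂ) = (k0 : ℂ) := by rw [hk0, ← Int.cast_natCast, Int.toNat_of_nonneg hn0]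
      have hk0m : k0 ≤ m := by omega
      rw [hzn]
      have lhs : cbinom (m : ℂ) (k0 : ℂ) = (m.choose k0 : ℂ) := by
        rw [cbinom]
        have h1 : (m:ℂ) - (k0:ℂ) + 1 = ((m - k0 : ℕ) : ℂ) + 1 := by
          push_cast [Nat.cast_sub hk0m]; ring
        rw [h1, Complex.Gamma_nat_eq_factorial, Complex.Gamma_nat_eq_factorial,
          Complex.Gamma_nat_eq_factorial]
        rw [Nat.cast_choose ℂ hk0m]
      rw [lhs]
      rw [Finset.sum_eq_single k0]
      · rw [sub_self, csinc, if_pos rfl, mul_one]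
      · intro k hk hkne
        have : ((k0:ℂ) - k) = (((k0 : ℤ) - k : ℤ) : ℂ) := by push_cast; ring
        rw [this, csinc_int_ne _ (by omega), mul_zero]
      · intro h
        exact absurd (Finset.mem_range.mpr (by omega)) h
    · -- integer out of range: both sides zero
      have rhs : ∑ k ∈ Finset.range (m + 1), (m.choose k : ℂ) * csinc ((n:ℂ) - k) = 0 := by
        apply Finset.sum_eq_zero
        intro k hk
        have hkm : k ≤ m := by simpa [Nat.lt_succ_iff] using hk
        have : ((n:ℂ) - k) = ((n - k : ℤ) : ℂ) := by push_cast; ring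
        rw [this, csinc_int_ne _ (by omega), mul_zero]
      rw [rhs, cbinom]
      rcases not_and_or.mp hn with h | h
      · have hneg : Complex.Gamma ((n:ℂ) + 1) = 0 := by
          rw [Complex.Gamma_eq_zero_iff]
          refine ⟨(-(n+1)).toNat, ?_⟩
          rw [← Int.cast_natCast, Int.toNat_of_nonneg (by omega : (0:ℤ) ≤ -(n+1))]
          push_cast; ring
        rw [hneg, zero_mul, div_zero]
      · have hneg : Complex.Gamma ((m:ℂ) - n + 1) = 0 := by
          rw [Complex.Gamma_eq_zero_iff]
          refine ⟨(-((m:ℤ) - n + 1)).toNat, ?_⟩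
          have h1 : (((-((m:ℤ) - n + 1)).toNat : ℤ)) = -((m:ℤ) - n + 1) :=
            Int.toNat_of_nonneg (by omega)
          have hzz : ((m:ℤ) - n + 1) = -((-((m:ℤ) - n + 1)).toNat : ℤ) := by omega
          exact_mod_cast hzz
        rw [hneg, mul_zero, div_zero]
  · -- non-integer case
    push_neg at hint
    have hnat : ∀ k : ℕ, z ≠ k := fun k h => hint k (by exact_mod_cast h)
    have hz0 : z ≠ 0 := by have := hnat 0; simpa using this
    have hpi : (π : ℂ) ≠ 0 := Complex.ofReal_ne_zero.mpr Real.pi_ne_zero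
    have hsub : ∀ k : ℕ, z - k ≠ 0 := fun k => sub_ne_zero.mpr (hnat k)
    -- RHS computation
    have rhs : ∑ k ∈ Finset.range (m + 1), (m.choose k : ℂ) * csinc (z - k)
        = Complex.sin (π * z) / π
          * ((-1)^m * m.factorial * (∏ j ∈ Finset.range (m+1), (z - j))⁻¹) := by
      have step : ∀ k ∈ Finset.range (m+1), (m.choose k : ℂ) * csinc (z - k)
          = Complex.sin (π * z) / π * ((-1:ℂ)^k * m.choose k * (z - k)⁻¹) := by
        intro k _
        rw [csinc, if_neg (hsub k), sin_pi_sub_nat']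
        field_simp
      rw [Finset.sum_congr rfl step, ← Finset.mul_sum,
        partial_fraction m z (fun k _ => hnat k)]
    rw [rhs, cbinom]
    -- LHS computation
    rw [Complex.Gamma_nat_eq_factorial, Gamma_shift m z (fun k _ => hnat k),
      Complex.Gamma_add_one z hz0]
    have hrefl : Complex.Gamma z * Complex.Gamma (1 - z) = π / Complex.sin (π * z) :=
      Complex.Gamma_mul_Gamma_one_sub z
    have hsin : Complex.sin (π * z) ≠ 0 := by
      intro h
      rw [Complex.sin_eq_zero_iff] at h
      obtain ⟨n, hn⟩ := h
      exact hint n (mul_left_cancel₀ hpi (by rw [hn]; ring))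
    have hprod : (∏ j ∈ Finset.range m, ((j:ℂ) + 1 - z)) ≠ 0 := by
      apply Finset.prod_ne_zero_iff.mpr
      intro j _
      intro h
      exact hnat (j+1) (by push_cast; linear_combination -h)
    have hprod2 : (∏ j ∈ Finset.range (m+1), (z - (j:ℂ))) ≠ 0 :=
      Finset.prod_ne_zero_iff.mpr (fun j _ => hsub j)
    -- key product identity
    have key : (∏ j ∈ Finset.range (m+1), (z - (j:ℂ)))
        = (-1)^m * z * (∏ j ∈ Finset.range m, ((j:ℂ) + 1 - z)) := by
      rw [Finset.prod_range_succ' (fun j => z - (j:ℂ)) m]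
      have : ∀ j ∈ Finset.range m, z - ((j+1:ℕ):ℂ) = (-1) * ((j:ℂ) + 1 - z) := by
        intro j _; push_cast; ring
      rw [Finset.prod_congr rfl this, Finset.prod_mul_distrib, Finset.prod_const]
      simp
      ring
    have hGamma : Complex.Gamma z * Complex.Gamma (1 - z) ≠ 0 := by
      rw [hrefl]; exact div_ne_zero hpi hsin
    have hGz : Complex.Gamma z ≠ 0 := fun h => hGamma (by rw [h, zero_mul])
    have hG1z : Complex.Gamma (1 - z) ≠ 0 := fun h => hGamma (by rw [h, mul_zero])
    have hrw : z * Complex.Gamma z * ((∏ j ∈ Finset.range m, ((j:ℂ) + 1 - z)) * Complex.Gamma (1 - z))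
        = z * (∏ j ∈ Finset.range m, ((j:ℂ) + 1 - z)) * (π / Complex.sin (π * z)) := by
      rw [← hrefl]; ring
    rw [key, hrw]
    have hmm : ((-1:ℂ))^m * (-1)^m = 1 := by
      rw [← pow_add, ← two_mul, pow_mul]; norm_num
    field_simp
end

section
/- Let w be a complex number with Re(w) > −1 and let z be any complex number. Then the series Σ_{k=0}^{∞} binom(w, k) · sinc(z − k) converges absolutely, i.e., the sequence k ↦ binom(w, k) · sinc(z − k) is summable in norm. -/
open scoped Real

/-!
The ratio of consecutive binomial coefficients is `‖binom(w, k+1) / binom(w, k)‖ = ‖w - k‖ / (k+1)`,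
which for large `k` is `≈ 1 - (Re w + 1)/(k+1)`. Since `Re w + 1 > 0`, it is at most `1 - δ/(k+1)`
for some `δ > 0`; by Bernoulli's inequality this makes `‖binom(w, k)‖ (k+1)^δ` eventually
nonincreasing, so `binom(w, k) = O(k^{-δ})`. On the other hand `sin` is `π`-antiperiodic, so
`‖sinc(z - k)‖ = ‖sin(πz)‖ / (π ‖z - k‖) = O(1/k)`, and the terms are `O(k^{-1-δ})`.
-/

open Filter Asymptotics

theorem one_sub_div_mul_add_one_rpow_le {x δ : ℝ} (hx : 0 < x) (hδ0 : 0 ≤ δ) (hδ1 : δ ≤ 1) :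
    (1 - δ / x) * (x + 1) ^ δ ≤ x ^ δ := by
  have hbernoulli : (x + 1) ^ δ ≤ x ^ δ * (1 + δ / x) := by
    rw [show x + 1 = x * (1 + x⁻¹) by field_simp, Real.mul_rpow hx.le (by positivity)]
    gcongr
    simpa [div_eq_mul_inv] using
      rpow_one_add_le_one_add_mul_self (by linarith [inv_pos.2 hx]) hδ0 hδ1
  have hxδ : 0 ≤ x ^ δ := Real.rpow_nonneg hx.le δ
  rcases le_or_gt 0 (1 - δ / x) with hpos | hneg
  · calc (1 - δ / x) * (x + 1) ^ δ ≤ (1 - δ / x) * (x ^ δ * (1 + δ / x)) := by gcongr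
      _ = x ^ δ * (1 - (δ / x) ^ 2) := by ring
      _ ≤ x ^ δ := by nlinarith [sq_nonneg (δ / x)]
  · nlinarith [Real.rpow_nonneg (by linarith : 0 ≤ x + 1) δ]

theorem isBigO_rpow_neg_of_norm_succ_le {E : Type*} [SeminormedAddCommGroup E] {u : ℕ → E}
    {δ : ℝ} (hδ0 : 0 ≤ δ) (hδ1 : δ ≤ 1)
    (h : ∀ᶠ k : ℕ in atTop, ‖u (k + 1)‖ ≤ (1 - δ / (k + 1)) * ‖u k‖) :
    u =O[atTop] fun k => (k : ℝ) ^ (-δ) := by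
  obtain ⟨N, hN⟩ := eventually_atTop.1 h
  set s : ℕ → ℝ := fun k => ‖u k‖ * ((k : ℝ) + 1) ^ δ
  have hs : AntitoneOn s (Set.Ici N) := by
    refine antitoneOn_nat_Ici_of_succ_le fun k hk => ?_
    have hk1 : (0 : ℝ) < k + 1 := by positivity
    calc s (k + 1) = ‖u (k + 1)‖ * ((k + 1 : ℝ) + 1) ^ δ := by simp [s]
      _ ≤ (1 - δ / (k + 1)) * ‖u k‖ * ((k + 1 : ℝ) + 1) ^ δ :=
        mul_le_mul_of_nonneg_right (hN k hk) (by positivity)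
      _ = ‖u k‖ * ((1 - δ / (k + 1)) * ((k + 1 : ℝ) + 1) ^ δ) := by ring
      _ ≤ s k :=
        mul_le_mul_of_nonneg_left (one_sub_div_mul_add_one_rpow_le hk1 hδ0 hδ1) (norm_nonneg _)
  refine .of_bound (s N) ?_
  filter_upwards [eventually_ge_atTop N, eventually_gt_atTop 0] with k hkN hk0
  have hk : (0 : ℝ) < k := by exact_mod_cast hk0
  have hk1 : (0 : ℝ) < k + 1 := by positivity
  calc ‖u k‖ = s k * ((k : ℝ) + 1) ^ (-δ) := by
        simp only [s, Real.rpow_neg hk1.le]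
        field_simp
    _ ≤ s N * (k : ℝ) ^ (-δ) :=
        mul_le_mul (hs (Set.mem_Ici.2 le_rfl) hkN hkN)
          (Real.rpow_le_rpow_of_nonpos hk (by linarith) (by linarith))
          (Real.rpow_nonneg hk1.le _) (by positivity)
    _ = s N * ‖(k : ℝ) ^ (-δ)‖ := by rw [Real.norm_of_nonneg (Real.rpow_nonneg hk.le _)]

theorem cbinom_natCast_add_one (w : ℂ) (k : ℕ) :
    cbinom w ((k + 1 : ℕ) : ℂ) = cbinom w k * ((w - k) / (k + 1)) := by
  have hk1 : (k + 1 : ℂ) ≠ 0 := Nat.cast_add_one_ne_zero k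
  rw [cbinom, cbinom, Nat.cast_add_one, show w - (k + 1) + 1 = w - k by ring,
    Complex.Gamma_add_one _ hk1]
  rcases eq_or_ne (w - k) 0 with hwk | hwk
  · simp [hwk]
  rw [Complex.Gamma_add_one _ hwk]
  rcases eq_or_ne (Complex.Gamma (w - k)) 0 with hΓ | hΓ
  · simp [hΓ]
  · field_simp

theorem eventually_norm_sub_natCast_le (w : ℂ) {c : ℝ} (hc : 0 < c) :
    ∀ᶠ k : ℕ in atTop, ‖w - k‖ ≤ k - w.re + c := by
  filter_upwards [(tendsto_natCast_atTop_atTop (R := ℝ)).eventually_ge_atTop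
    (w.re + w.im ^ 2 / (2 * c))] with k hk
  have hre : w.im ^ 2 ≤ 2 * c * (k - w.re) := by
    have := mul_le_mul_of_nonneg_left hk (by positivity : 0 ≤ 2 * c)
    rw [mul_add, mul_div_cancel₀ _ (by positivity)] at this
    linarith
  have hnorm : ‖w - k‖ ^ 2 = (k - w.re) ^ 2 + w.im ^ 2 := by
    rw [Complex.sq_norm, Complex.normSq_apply]
    simp only [Complex.sub_re, Complex.sub_im, Complex.natCast_re, Complex.natCast_im]
    ring
  have hnonneg : 0 ≤ (k : ℝ) - w.re + c := by nlinarith [sq_nonneg w.im]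
  rw [← pow_le_pow_iff_left₀ (norm_nonneg _) hnonneg two_ne_zero, hnorm]
  nlinarith

theorem cbinom_natCast_isBigO_rpow_neg {w : ℂ} {δ : ℝ} (hδ0 : 0 ≤ δ) (hδ1 : δ ≤ 1)
    (hδw : δ < w.re + 1) :
    (fun k : ℕ => cbinom w k) =O[atTop] fun k => (k : ℝ) ^ (-δ) := by
  refine isBigO_rpow_neg_of_norm_succ_le hδ0 hδ1 ?_
  filter_upwards [eventually_norm_sub_natCast_le w (by linarith : 0 < w.re + 1 - δ)] with k hk
  have hk1 : (0 : ℝ) < k + 1 := by positivity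
  rw [cbinom_natCast_add_one, norm_mul, norm_div, mul_comm,
    show ‖(k + 1 : ℂ)‖ = k + 1 by exact_mod_cast Complex.norm_natCast (k + 1)]
  gcongr
  rw [div_le_iff₀ hk1, sub_mul, div_mul_cancel₀ _ hk1.ne']
  linarith

theorem norm_csinc_sub_natCast {z : ℂ} {k : ℕ} (hz : z ≠ k) :
    ‖csinc (z - k)‖ = ‖Complex.sin (π * z)‖ / (π * ‖z - k‖) := by
  rw [csinc, if_neg (sub_ne_zero.2 hz), norm_div, norm_mul, Complex.norm_real,
    Real.norm_of_nonneg Real.pi_pos.le, mul_sub, mul_comm (π : ℂ) k,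
    Complex.sin_antiperiodic.sub_nat_mul_eq, norm_mul, norm_pow, norm_neg, norm_one, one_pow,
    one_mul]

theorem csinc_sub_natCast_isBigO_inv (z : ℂ) :
    (fun k : ℕ => csinc (z - k)) =O[atTop] fun k => (k : ℝ)⁻¹ := by
  refine .of_bound (2 * ‖Complex.sin (π * z)‖ / π) ?_
  filter_upwards [(tendsto_natCast_atTop_atTop (R := ℝ)).eventually_ge_atTop (2 * ‖z‖ + 1)]
    with k hk
  have hk0 : (0 : ℝ) < k := by linarith [norm_nonneg z]
  have hdist : (k : ℝ) / 2 ≤ ‖z - k‖ := by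
    have := norm_sub_norm_le (k : ℂ) z
    rw [Complex.norm_natCast, norm_sub_rev] at this
    linarith
  have hz : z ≠ k := fun h => by simp [h] at hdist; linarith
  rw [norm_csinc_sub_natCast hz, norm_inv, Real.norm_of_nonneg hk0.le]
  calc ‖Complex.sin (π * z)‖ / (π * ‖z - k‖) ≤ ‖Complex.sin (π * z)‖ / (π * (k / 2)) := by
        gcongr
    _ = 2 * ‖Complex.sin (π * z)‖ / π * (k : ℝ)⁻¹ := by field_simp

theorem binom_sinc_series_abs_convergent (w : ℂ) (hw : -1 < w.re) (z : ℂ) :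
    Summable (fun k : ℕ => ‖cbinom w (k : ℂ) * csinc (z - k)‖) := by
  set δ : ℝ := min 1 ((w.re + 1) / 2)
  have hδ0 : 0 < δ := lt_min one_pos (by linarith)
  have hδw : δ < w.re + 1 := (min_le_right _ _).trans_lt (by linarith)
  have hterm : (fun k : ℕ => cbinom w k * csinc (z - k)) =O[atTop]
      fun k => (k : ℝ) ^ (-δ - 1) := by
    refine ((cbinom_natCast_isBigO_rpow_neg hδ0.le (min_le_left _ _) hδw).mul
      (csinc_sub_natCast_isBigO_inv z)).trans_eventuallyEq ?_
    filter_upwards [eventually_gt_atTop 0] with k hk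
    rw [Real.rpow_sub_one (by positivity), div_eq_mul_inv]
  exact summable_of_isBigO_nat (Real.summable_nat_rpow.2 (by linarith)) hterm.norm_left
end

section
/- For every nonnegative integer m and every complex number z that is not one of the integers 0, 1, …, m, the generalized binomial coefficient satisfies binom(m, z) = (−1)^m · m! · sin(πz) / (π · ∏_{k=0}^{m} (z − k)). -/
open scoped Real

/-!
Peeling off `m + 1` factors with `Γ(s + 1) = s Γ(s)` gives `Γ(z + 1) = Γ(z - m) ∏_{k ≤ m} (z - k)`,
and Euler's reflection formula turns `Γ(z - m) Γ(m - z + 1)` into `π / sin (π (z - m))`, where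
`sin (π (z - m)) = (-1)^m sin (π z)`. No case split on `sin (π z) = 0` is needed: the reflection
formula holds in Mathlib with the junk value `π / 0 = 0`, and so does `a / (b / c) = a c / b`.
-/

namespace Complex

theorem Gamma_add_one_eq_prod_mul_Gamma_sub_nat (z : ℂ) (n : ℕ) (hz : ∀ k < n, z ≠ k) :
    Gamma (z + 1) = (∏ k ∈ Finset.range n, (z - k)) * Gamma (z + 1 - n) := by
  induction n with
  | zero => simp
  | succ n ih =>
    have hzn : z - n ≠ 0 := sub_ne_zero.mpr (hz n n.lt_succ_self)
    have hshift : z + 1 - n = (z - n) + 1 := by ring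
    have hshift' : z + 1 - (n + 1 : ℕ) = z - n := by push_cast; ring
    rw [ih fun k hk => hz k (hk.trans n.lt_succ_self), hshift, Gamma_add_one _ hzn,
      Finset.prod_range_succ, hshift', mul_assoc]

theorem sin_pi_mul_sub_nat (z : ℂ) (n : ℕ) : sin (π * (z - n)) = (-1) ^ n * sin (π * z) := by
  rw [mul_sub, mul_comm (π : ℂ) n]
  exact sin_antiperiodic.sub_nat_mul_eq n

end Complex

theorem binom_nat_eq_sin_div_prod (m : ℕ) (z : ℂ)
    (hz : ∀ k : ℕ, k ≤ m → z ≠ (k : ℂ)) :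
    cbinom (m : ℂ) z =
      (-1) ^ m * (m.factorial : ℂ) * Complex.sin (π * z) /
        ((π : ℂ) * ∏ k ∈ Finset.range (m + 1), (z - k)) := by
  have hGamma := Complex.Gamma_add_one_eq_prod_mul_Gamma_sub_nat z (m + 1)
    fun k hk => hz k (Nat.lt_succ_iff.mp hk)
  have hreflect : Complex.Gamma (z - m) * Complex.Gamma (m - z + 1) =
      π / Complex.sin (π * (z - m)) := by
    rw [show (m : ℂ) - z + 1 = 1 - (z - m) by ring]
    exact Complex.Gamma_mul_Gamma_one_sub _
  rw [cbinom, Complex.Gamma_nat_eq_factorial, hGamma, Nat.cast_succ, add_sub_add_right_eq_sub,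
    mul_assoc, hreflect, Complex.sin_pi_mul_sub_nat, mul_div_assoc', div_div_eq_mul_div]
  ring
end

section
/- Let α be a complex number with Im(α) > 0. Then ∫_{−∞}^{∞} sin(πx)/(x + α) dx = π · e^{iπα}. -/
/-!
Write `sin (π x) = (e^{iπx} - e^{-iπx}) / (2i)` and reflect `x ↦ -x` in the second term: the
integral over `[-R, R]` becomes `(2i)⁻¹` times the sum of the integrals of `e^{iπx} / (x - a)` for
`a = -α` and `a = α`. Integrate `e^{iπz} / (z - a)` around the square `[-R, R] × [0, R]`. On its
three far edges the integrand is `O(e^{-π Im z} / R)`, so their contribution vanishes as `R → ∞`,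
while by Cauchy's formula for rectangles the boundary integral is `0` for `Im a < 0` and
`2πi e^{iπa}` for `Im a > 0`. Subtracting the pole via `dslope` reduces Cauchy's formula to the
boundary integral of `(z - a)⁻¹`, which is computed edge by edge with branches of `log`.
-/

open scoped Real Interval Topology
open MeasureTheory Filter Complex Set intervalIntegral

noncomputable def rectBoundaryIntegral (f : ℂ → ℂ) (x₀ x₁ y₀ y₁ : ℝ) : ℂ :=
  (∫ x in x₀..x₁, f (x + y₀ * I)) - (∫ x in x₀..x₁, f (x + y₁ * I))
    + I * (∫ y in y₀..y₁, f (x₁ + y * I)) - I * ∫ y in y₀..y₁, f (x₀ + y * I)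

theorem rectBoundaryIntegral_eq_zero_of_differentiableOn {f : ℂ → ℂ} {x₀ x₁ y₀ y₁ : ℝ}
    (hf : DifferentiableOn ℂ f ([[x₀, x₁]] ×ℂ [[y₀, y₁]])) :
    rectBoundaryIntegral f x₀ x₁ y₀ y₁ = 0 := by
  simpa [rectBoundaryIntegral] using
    integral_boundary_rect_eq_zero_of_differentiableOn f (x₀ + y₀ * I) (x₁ + y₁ * I)
      (by simpa using hf)

theorem Complex.log_neg_of_im_pos {w : ℂ} (hw : 0 < w.im) : log (-w) = log w - π * I := by
  simp only [log, norm_neg, arg_neg_eq_arg_sub_pi_of_im_pos hw, ofReal_sub]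
  ring

theorem Complex.log_neg_of_im_neg {w : ℂ} (hw : w.im < 0) : log (-w) = log w + π * I := by
  simp only [log, norm_neg, arg_neg_eq_arg_add_pi_of_im_neg hw, ofReal_add]
  ring

theorem integral_inv_mul_eq_log_sub {γ : ℝ → ℂ} {v : ℂ} (hγ : ∀ u, HasDerivAt γ v u)
    (hslit : ∀ u, γ u ∈ slitPlane) (s t : ℝ) :
    ∫ u in s..t, (γ u)⁻¹ * v = log (γ t) - log (γ s) := by
  have hcont : Continuous γ := continuous_iff_continuousAt.2 fun u => (hγ u).continuousAt
  refine integral_eq_sub_of_hasDerivAt (fun u _ => (hasDerivAt_log (hslit u)).comp u (hγ u)) ?_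
  exact ((hcont.inv₀ fun u => slitPlane_ne_zero (hslit u)).mul continuous_const
    ).intervalIntegrable _ _

theorem rectBoundaryIntegral_inv_sub {a : ℂ} {x₀ x₁ y₀ y₁ : ℝ} (hx₀ : x₀ < a.re)
    (hx₁ : a.re < x₁) (hy₀ : y₀ < a.im) (hy₁ : a.im < y₁) :
    rectBoundaryIntegral (fun z => (z - a)⁻¹) x₀ x₁ y₀ y₁ = 2 * π * I := by
  have horizontal (y : ℝ) (hy : y ≠ a.im) (s t : ℝ) :
      ∫ x in s..t, ((x : ℂ) + y * I - a)⁻¹ = log (t + y * I - a) - log (s + y * I - a) := by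
    simpa using integral_inv_mul_eq_log_sub (γ := fun x : ℝ => (x : ℂ) + y * I - a) (v := 1)
      (fun u => ((hasDerivAt_id u).ofReal_comp.add_const _).sub_const a)
      (fun u => mem_slitPlane_iff.2 (Or.inr (by simpa [sub_eq_zero]))) s t
  have hvert (x u : ℝ) : HasDerivAt (fun y : ℝ => (x : ℂ) + y * I - a) I u := by
    simpa using (((hasDerivAt_id u).ofReal_comp.mul_const I).const_add (x : ℂ)).sub_const a
  have right (s t : ℝ) :
      I * ∫ y in s..t, ((x₁ : ℂ) + y * I - a)⁻¹ = log (x₁ + t * I - a) - log (x₁ + s * I - a) := by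
    rw [← integral_inv_mul_eq_log_sub (hvert x₁)
      (fun u => mem_slitPlane_iff.2 (Or.inl (by simpa using hx₁))),
      ← intervalIntegral.integral_const_mul]
    simp_rw [mul_comm I]
  -- The principal branch is continuous on every edge except the left one, where `log (-(z - a))`
  -- is used instead; the two branches differ by `∓πi` at the left corners.
  have left (s t : ℝ) :
      I * ∫ y in s..t, ((x₀ : ℂ) + y * I - a)⁻¹
        = log (-(x₀ + t * I - a)) - log (-(x₀ + s * I - a)) := by
    rw [← integral_inv_mul_eq_log_sub (γ := fun y : ℝ => -((x₀ : ℂ) + y * I - a))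
      (fun u => (hvert x₀ u).neg) (fun u => mem_slitPlane_iff.2 (Or.inl (by simpa using hx₀))),
      ← intervalIntegral.integral_const_mul]
    simp_rw [inv_neg, neg_mul_neg, mul_comm I]
  simp only [rectBoundaryIntegral]
  rw [horizontal y₀ hy₀.ne, horizontal y₁ hy₁.ne', right, left,
    log_neg_of_im_pos (w := x₀ + y₁ * I - a) (by simpa using hy₁),
    log_neg_of_im_neg (w := x₀ + y₀ * I - a) (by simpa using hy₀)]
  ring

theorem integral_div_sub_eq_integral_dslope_add {f : ℂ → ℂ} {a : ℂ} {γ : ℝ → ℂ} {s t : ℝ}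
    (hγ : Continuous γ) (hγa : ∀ u, γ u ≠ a) (hf : ContinuousOn (fun u => f (γ u)) [[s, t]]) :
    ∫ u in s..t, f (γ u) / (γ u - a)
      = (∫ u in s..t, dslope f a (γ u)) + f a * ∫ u in s..t, (γ u - a)⁻¹ := by
  have hne (u : ℝ) : γ u - a ≠ 0 := sub_ne_zero.2 (hγa u)
  have hinv : Continuous fun u => (γ u - a)⁻¹ := (hγ.sub continuous_const).inv₀ hne
  have hdslope : ∫ u in s..t, dslope f a (γ u)
      = ∫ u in s..t, (f (γ u) / (γ u - a) - f a * (γ u - a)⁻¹) := by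
    refine integral_congr fun u _ => ?_
    rw [dslope_of_ne _ (hγa u), slope_def_field]
    field_simp
  have hquot : IntervalIntegrable (fun u => f (γ u) / (γ u - a)) volume s t :=
    (hf.div (hγ.sub continuous_const).continuousOn fun u _ => hne u).intervalIntegrable
  rw [hdslope, integral_sub hquot ((hinv.intervalIntegrable _ _).const_mul _),
    intervalIntegral.integral_const_mul]
  ring

theorem rectBoundaryIntegral_div_sub {f : ℂ → ℂ} {a : ℂ} {x₀ x₁ y₀ y₁ : ℝ}
    (hf : DifferentiableOn ℂ f ([[x₀, x₁]] ×ℂ [[y₀, y₁]])) (hx₀ : x₀ < a.re)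
    (hx₁ : a.re < x₁) (hy₀ : y₀ < a.im) (hy₁ : a.im < y₁) :
    rectBoundaryIntegral (fun z => f z / (z - a)) x₀ x₁ y₀ y₁ = 2 * π * I * f a := by
  have hnhds : [[x₀, x₁]] ×ℂ [[y₀, y₁]] ∈ 𝓝 a := by
    refine mem_of_superset ((isOpen_Ioo.reProdIm isOpen_Ioo).mem_nhds ⟨⟨hx₀, hx₁⟩, ⟨hy₀, hy₁⟩⟩) ?_
    exact reProdIm_subset_iff'.2 (Or.inl ⟨Ioo_subset_Icc_self.trans Icc_subset_uIcc,
      Ioo_subset_Icc_self.trans Icc_subset_uIcc⟩)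
  have hdslope := rectBoundaryIntegral_eq_zero_of_differentiableOn
    ((differentiableOn_dslope hnhds).2 hf)
  have hinv := rectBoundaryIntegral_inv_sub hx₀ hx₁ hy₀ hy₁
  have hmem {x y : ℝ} (hx : x ∈ [[x₀, x₁]]) (hy : y ∈ [[y₀, y₁]]) :
      (x : ℂ) + y * I ∈ [[x₀, x₁]] ×ℂ [[y₀, y₁]] := by
    simpa [mem_reProdIm] using ⟨hx, hy⟩
  have horizontal {y : ℝ} (hy : y ∈ [[y₀, y₁]]) (hya : y ≠ a.im) :=
    integral_div_sub_eq_integral_dslope_add (f := f) (s := x₀) (t := x₁)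
      (γ := fun x : ℝ => (x : ℂ) + y * I) (by fun_prop)
      (fun x h => hya (by simpa using congrArg im h))
      (hf.continuousOn.comp (by fun_prop) fun x hx => hmem hx hy)
  have vertical {x : ℝ} (hx : x ∈ [[x₀, x₁]]) (hxa : x ≠ a.re) :=
    integral_div_sub_eq_integral_dslope_add (f := f) (s := y₀) (t := y₁)
      (γ := fun y : ℝ => (x : ℂ) + y * I) (by fun_prop)
      (fun y h => hxa (by simpa using congrArg re h))
      (hf.continuousOn.comp (by fun_prop) fun y hy => hmem hx hy)
  simp only [rectBoundaryIntegral] at hdslope hinv ⊢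
  rw [horizontal left_mem_uIcc hy₀.ne, horizontal right_mem_uIcc hy₁.ne',
    vertical left_mem_uIcc hx₀.ne, vertical right_mem_uIcc hx₁.ne']
  linear_combination hdslope + f a * hinv

theorem norm_cexp_I_mul (c : ℝ) (z : ℂ) : ‖cexp (I * c * z)‖ = Real.exp (-(c * z.im)) := by
  simp [norm_exp, mul_re, mul_im]

theorem norm_cexp_I_mul_div_sub_le (c : ℝ) {a z : ℂ} {R : ℝ} (ha : ‖a‖ < R) (hz : R ≤ ‖z‖) :
    ‖cexp (I * c * z) / (z - a)‖ ≤ Real.exp (-(c * z.im)) / (R - ‖a‖) := by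
  rw [norm_div, norm_cexp_I_mul]
  gcongr
  linarith [norm_sub_norm_le z a]

theorem integral_exp_neg_mul_le {c : ℝ} (hc : 0 < c) (R : ℝ) :
    ∫ y in (0 : ℝ)..R, Real.exp (-(c * y)) ≤ c⁻¹ := by
  have h := integral_comp_mul_left (fun y => Real.exp y) (neg_ne_zero.2 hc.ne') (a := 0) (b := R)
  simp only [neg_mul, mul_zero, integral_exp, Real.exp_zero, smul_eq_mul] at h
  rw [h, inv_neg, neg_mul, ← mul_neg, neg_sub]
  exact mul_le_of_le_one_right (inv_pos.2 hc).le (by linarith [Real.exp_pos (-(c * R))])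

theorem norm_integral_top_edge_le {c : ℝ} (hc : 0 < c) {a : ℂ} {R : ℝ} (ha : ‖a‖ < R) :
    ‖∫ x in -R..R, cexp (I * c * (x + R * I)) / (x + R * I - a)‖ ≤ 2 / (c * (R - ‖a‖)) := by
  have hR : 0 < R := (norm_nonneg a).trans_lt ha
  have hbound : ∀ x ∈ Ι (-R) R, ‖cexp (I * c * (x + R * I)) / (x + R * I - a)‖
      ≤ Real.exp (-(c * R)) / (R - ‖a‖) := fun x _ => by
    simpa using norm_cexp_I_mul_div_sub_le c ha (z := x + R * I)
      (by simpa [abs_of_pos hR] using abs_im_le_norm ((x : ℂ) + R * I))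
  refine (norm_integral_le_of_norm_le_const hbound).trans ?_
  have hdecay : c * R * Real.exp (-(c * R)) ≤ 1 :=
    (Real.mul_exp_neg_le_exp_neg_one _).trans (Real.exp_le_one_iff.2 (by norm_num))
  rw [sub_neg_eq_add, abs_of_pos (by linarith), div_mul_eq_mul_div,
    div_le_div_iff₀ (sub_pos.2 ha) (mul_pos hc (sub_pos.2 ha))]
  nlinarith [sub_pos.2 ha]

theorem norm_integral_vertical_edge_le {c : ℝ} (hc : 0 < c) {a : ℂ} {R x : ℝ} (ha : ‖a‖ < R)
    (hx : |x| = R) :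
    ‖∫ y in (0 : ℝ)..R, cexp (I * c * (x + y * I)) / (x + y * I - a)‖
      ≤ 1 / (c * (R - ‖a‖)) := by
  have hR : 0 < R := (norm_nonneg a).trans_lt ha
  have hbound : ∀ y : ℝ, ‖cexp (I * c * (x + y * I)) / (x + y * I - a)‖
      ≤ Real.exp (-(c * y)) / (R - ‖a‖) := fun y => by
    simpa using norm_cexp_I_mul_div_sub_le c ha (z := x + y * I)
      (by simpa [hx] using abs_re_le_norm ((x : ℂ) + y * I))
  refine (norm_integral_le_of_norm_le hR.le (ae_of_all _ fun y _ => hbound y)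
    (Continuous.intervalIntegrable (by fun_prop) _ _)).trans ?_
  rw [intervalIntegral.integral_div, ← div_div, one_div]
  gcongr
  exact integral_exp_neg_mul_le hc R

theorem tendsto_integral_sub_rectBoundaryIntegral {c : ℝ} (hc : 0 < c) (a : ℂ) :
    Tendsto (fun R : ℝ => (∫ x in -R..R, cexp (I * c * x) / (x - a))
      - rectBoundaryIntegral (fun z => cexp (I * c * z) / (z - a)) (-R) R 0 R) atTop (𝓝 0) := by
  refine squeeze_zero_norm' (a := fun R => 4 / (c * (R - ‖a‖))) ?_
    (tendsto_const_nhds.div_atTop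
      ((tendsto_atTop_add_const_right _ (-‖a‖) tendsto_id).const_mul_atTop hc))
  filter_upwards [eventually_gt_atTop ‖a‖] with R ha
  have hR : 0 < R := (norm_nonneg a).trans_lt ha
  have htop := norm_integral_top_edge_le hc ha
  have hright := norm_integral_vertical_edge_le hc ha (abs_of_pos hR)
  have hleft := norm_integral_vertical_edge_le hc ha (x := -R) (by simp [abs_of_pos hR])
  set top := ∫ x in -R..R, cexp (I * c * (x + R * I)) / (x + R * I - a)
  set right := ∫ y in (0 : ℝ)..R, cexp (I * c * (R + y * I)) / (R + y * I - a)
  set left := ∫ y in (0 : ℝ)..R, cexp (I * c * ((-R : ℝ) + y * I)) / ((-R : ℝ) + y * I - a)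
  have hedges : (∫ x in -R..R, cexp (I * c * x) / (x - a))
      - rectBoundaryIntegral (fun z => cexp (I * c * z) / (z - a)) (-R) R 0 R
      = top - I * right + I * left := by
    simp only [rectBoundaryIntegral, ofReal_zero, zero_mul, add_zero]
    ring
  calc _ = ‖top - I * right + I * left‖ := by rw [hedges]
    _ ≤ ‖top‖ + ‖right‖ + ‖left‖ := by
      refine (norm_add_le _ _).trans (add_le_add ((norm_sub_le _ _).trans ?_) ?_) <;>
        simp
    _ ≤ 2 / (c * (R - ‖a‖)) + 1 / (c * (R - ‖a‖)) + 1 / (c * (R - ‖a‖)) := by gcongr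
    _ = 4 / (c * (R - ‖a‖)) := by ring

theorem tendsto_integral_cexp_I_mul_div_sub_of_im_neg {c : ℝ} (hc : 0 < c) {a : ℂ}
    (ha : a.im < 0) :
    Tendsto (fun R : ℝ => ∫ x in -R..R, cexp (I * c * x) / (x - a)) atTop (𝓝 0) := by
  refine (tendsto_integral_sub_rectBoundaryIntegral hc a).congr' ?_
  filter_upwards [eventually_ge_atTop 0] with R hR
  rw [rectBoundaryIntegral_eq_zero_of_differentiableOn, sub_zero]
  refine DifferentiableOn.div (by fun_prop) (by fun_prop) fun z hz => sub_ne_zero.2 ?_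
  have him : z.im ∈ [[0, R]] := (mem_reProdIm.1 hz).2
  rw [uIcc_of_le hR] at him
  exact fun hza => ha.not_ge (hza ▸ him.1)

theorem tendsto_integral_cexp_I_mul_div_sub_of_im_pos {c : ℝ} (hc : 0 < c) {a : ℂ}
    (ha : 0 < a.im) :
    Tendsto (fun R : ℝ => ∫ x in -R..R, cexp (I * c * x) / (x - a)) atTop
      (𝓝 (2 * π * I * cexp (I * c * a))) := by
  have h := (tendsto_integral_sub_rectBoundaryIntegral hc a).add_const
    (2 * π * I * cexp (I * c * a))
  rw [zero_add] at h
  refine h.congr' ?_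
  filter_upwards [eventually_gt_atTop ‖a‖] with R hR
  have hre := abs_lt.1 ((abs_re_le_norm a).trans_lt hR)
  have him := abs_lt.1 ((abs_im_le_norm a).trans_lt hR)
  rw [rectBoundaryIntegral_div_sub (f := fun z => cexp (I * c * z)) (by fun_prop)
    hre.1 hre.2 ha him.2]
  ring

theorem integral_sin_div_add_eq (c : ℝ) {α : ℂ} (hα : α.im ≠ 0) (R : ℝ) :
    ∫ x in -R..R, Complex.sin (c * x) / (x + α)
      = (2 * I)⁻¹ * ((∫ x in -R..R, cexp (I * c * x) / (x - -α))
        + ∫ x in -R..R, cexp (I * c * x) / (x - α)) := by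
  have hne (x : ℝ) {β : ℂ} (hβ : β.im ≠ 0) : (x : ℂ) - β ≠ 0 :=
    fun h => hβ (by simpa using (congrArg im h).symm)
  have hreflect : ∫ x in -R..R, cexp (I * c * x) / (x - α)
      = ∫ x in -R..R, cexp (I * c * ↑(-x)) / (↑(-x) - α) := by
    simpa using (integral_comp_neg (a := -R) (b := R)
      fun x : ℝ => cexp (I * c * x) / (x - α)).symm
  have hint : IntervalIntegrable (fun x : ℝ => cexp (I * c * x) / (x - -α)) volume (-R) R :=
    (Continuous.div (by fun_prop) (by fun_prop) fun x => hne x (β := -α) (by simpa using hα)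
      ).intervalIntegrable _ _
  have hint_reflect : IntervalIntegrable (fun x : ℝ => cexp (I * c * ↑(-x)) / (↑(-x) - α))
      volume (-R) R :=
    (Continuous.div (by fun_prop) (by fun_prop) fun x => hne (-x) hα).intervalIntegrable _ _
  rw [hreflect, ← integral_add hint hint_reflect,
    ← intervalIntegral.integral_const_mul]
  refine integral_congr fun x _ => ?_
  have hx : (x : ℂ) + α ≠ 0 := by simpa using hne x (β := -α) (by simpa using hα)
  have hx' : -(x : ℂ) - α ≠ 0 := by rw [← neg_add']; exact neg_ne_zero.2 hx
  simp only [Complex.sin, ofReal_neg, sub_neg_eq_add]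
  field_simp
  ring_nf
  rw [I_sq]
  ring

theorem improper_integral_sin_div_linear (α : ℂ) (hα : 0 < α.im) :
    Tendsto (fun R : ℝ => ∫ x in (-R)..R, Complex.sin (π * x) / ((x : ℂ) + α))
      atTop (nhds ((π : ℂ) * Complex.exp (Complex.I * π * α))) := by
  have hlower := tendsto_integral_cexp_I_mul_div_sub_of_im_neg Real.pi_pos (a := -α)
    (by simpa using hα)
  have hupper := tendsto_integral_cexp_I_mul_div_sub_of_im_pos Real.pi_pos hα
  have h := (hlower.add hupper).const_mul (2 * I)⁻¹
  simp_rw [← integral_sin_div_add_eq π hα.ne'] at h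
  convert h using 2
  rw [zero_add]
  field_simp
end
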